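/- Let I₀(z) = ∑_{n=0}^∞ (z/2)^{2n}/(n!)² and I₁(z) = ∑_{n=0}^∞ (z/2)^{2n+1}/(n!·(n+1)!) denote the modified Bessel functions of the first kind of orders 0 and 1. Then for all real a, p with 0 < a < p, (π a/2) · ∫_0^∞ e^{−px} · I₀(ax/2) · I₁(ax/2) dx = (π/2) · ∑_{n=1}^∞ binom(2n, n)² · (a/(4p))^{2n}. -/
import Mathlib

open MeasureTheory Set

/-- The modified Bessel function of the first kind of order 0,
`I₀(z) = ∑ (z/2)^{2n}/(n!)²`. -/
noncomputable def besselI0 (z : ℝ) : ℝ :=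
  ∑' n : ℕ, (z / 2) ^ (2 * n) / ((n.factorial : ℝ)) ^ 2

/-- The modified Bessel function of the first kind of order 1,
`I₁(z) = ∑ (z/2)^{2n+1}/(n!·(n+1)!)`. -/
noncomputable def besselI1 (z : ℝ) : ℝ :=
  ∑' n : ℕ, (z / 2) ^ (2 * n + 1) / ((n.factorial : ℝ) * ((n + 1).factorial : ℝ))

private lemma choose_le_two_pow' (n k : ℕ) : n.choose k ≤ 2 ^ n := by
  rcases le_or_gt k n with h | h
  · calc n.choose k ≤ ∑ m ∈ Finset.range (n+1), n.choose m :=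
        Finset.single_le_sum (fun i _ => Nat.zero_le _) (Finset.mem_range.mpr (by omega))
      _ = 2 ^ n := Nat.sum_range_choose n
  · simp [Nat.choose_eq_zero_of_lt h]

private lemma vand (k : ℕ) :
    ∑ m ∈ Finset.range (k+1), k.choose m * (k+1).choose m = (2*k+1).choose k := by
  have h := Nat.add_choose_eq k (k+1) (k+1)
  rw [show k + (k+1) = 2*k+1 by ring, Finset.Nat.sum_antidiagonal_eq_sum_range_succ_mk] at h
  dsimp only at h
  rw [Finset.sum_range_succ, Nat.choose_eq_zero_of_lt (Nat.lt_succ_self k), zero_mul,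
    add_zero] at h
  have hsym : (2*k+1).choose (k+1) = (2*k+1).choose k := by
    rw [← Nat.choose_symm (by omega : k+1 ≤ 2*k+1), show 2*k+1-(k+1) = k by omega]
  rw [hsym] at h
  rw [h]
  apply Finset.sum_congr rfl
  intro m hm
  have hm' : m ≤ k+1 := by have := Finset.mem_range.mp hm; omega
  rw [← Nat.choose_symm hm']

private lemma fact_ident (k m : ℕ) (hm : m ≤ k) :
    (2*k+1).choose k * k.choose m * (k+1).choose m *
      (m.factorial * m.factorial * (k-m).factorial * (k-m+1).factorial)
    = (2*k+1).factorial := by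
  have h1 := Nat.choose_mul_factorial_mul_factorial (show k ≤ 2*k+1 by omega)
  rw [show 2*k+1-k = k+1 by omega] at h1
  have h2 := Nat.choose_mul_factorial_mul_factorial hm
  have h3 : (k+1).choose m * m.factorial * (k-m+1).factorial = (k+1).factorial := by
    rw [show k-m+1 = k+1-m by omega]
    exact Nat.choose_mul_factorial_mul_factorial (by omega)
  calc (2*k+1).choose k * k.choose m * (k+1).choose m *
      (m.factorial * m.factorial * (k-m).factorial * (k-m+1).factorial)
      = (2*k+1).choose k * ((k.choose m * m.factorial * (k-m).factorial) *
        ((k+1).choose m * m.factorial * (k-m+1).factorial)) := by ring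
    _ = (2*k+1).choose k * (k.factorial * (k+1).factorial) := by rw [h2, h3]
    _ = (2*k+1).factorial := by rw [← h1]; ring

private noncomputable def cc (k : ℕ) : ℝ :=
  ∑ m ∈ Finset.range (k+1),
    1 / ((m.factorial : ℝ)^2 * ((k-m).factorial : ℝ) * ((k-m+1).factorial : ℝ))

private lemma cc_nonneg (k : ℕ) : 0 ≤ cc k := by
  apply Finset.sum_nonneg
  intro m _
  positivity

private lemma cc_eq (k : ℕ) :
    cc k * ((2*k+1).factorial : ℝ) = (((2*k+1).choose k : ℕ) : ℝ)^2 := by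
  rw [cc, Finset.sum_mul]
  have key : ∀ m ∈ Finset.range (k+1),
      1 / ((m.factorial : ℝ)^2 * ((k-m).factorial : ℝ) * ((k-m+1).factorial : ℝ)) *
        ((2*k+1).factorial : ℝ)
      = (((2*k+1).choose k : ℕ) : ℝ) * ((k.choose m : ℕ) * ((k+1).choose m : ℕ)) := by
    intro m hm
    have hm' : m ≤ k := by have := Finset.mem_range.mp hm; omega
    have hh := congrArg (Nat.cast : ℕ → ℝ) (fact_ident k m hm')
    push_cast at hh
    have hD : ((m.factorial : ℝ)^2 * ((k-m).factorial : ℝ) * ((k-m+1).factorial : ℝ)) ≠ 0 := by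
      positivity
    rw [div_mul_eq_mul_div, one_mul, div_eq_iff hD]
    linear_combination -hh
  rw [Finset.sum_congr rfl key, ← Finset.mul_sum]
  have hv : ∑ m ∈ Finset.range (k+1), ((k.choose m : ℕ) : ℝ) * (((k+1).choose m : ℕ) : ℝ)
      = (((2*k+1).choose k : ℕ) : ℝ) := by
    push_cast [← vand k]
    rfl
  rw [hv, sq]

private lemma summable0 (u : ℝ) :
    Summable (fun n : ℕ => ‖u ^ (2*n) / ((n.factorial : ℝ))^2‖) := by
  apply Summable.of_nonneg_of_le (fun n => norm_nonneg _) (fun n => ?_)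
    (Real.summable_pow_div_factorial (u^2))
  have h1 : u ^ (2*n) = (u^2)^n := by rw [pow_mul]
  rw [h1, Real.norm_of_nonneg (by positivity)]
  gcongr
  exact_mod_cast Nat.le_self_pow two_ne_zero n.factorial

private lemma summable1 (u : ℝ) :
    Summable (fun n : ℕ => ‖u ^ (2*n+1) / ((n.factorial : ℝ) * (((n+1).factorial : ℕ) : ℝ))‖) := by
  apply Summable.of_nonneg_of_le (fun n => norm_nonneg _) (fun n => ?_)
    ((Real.summable_pow_div_factorial (u^2)).mul_left |u|)
  have h1 : |u ^ (2*n+1)| = |u| * (u^2)^n := by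
    rw [abs_pow, pow_succ, pow_mul, mul_comm, sq_abs]
  rw [norm_div, Real.norm_eq_abs, h1, Real.norm_of_nonneg (by positivity),
    mul_div_assoc]
  gcongr
  exact_mod_cast Nat.le_mul_of_pos_right n.factorial (n+1).factorial_pos

private lemma besselProd (u : ℝ) :
    (∑' n : ℕ, u ^ (2*n) / ((n.factorial : ℝ))^2) *
      (∑' n : ℕ, u ^ (2*n+1) / ((n.factorial : ℝ) * (((n+1).factorial : ℕ) : ℝ)))
    = ∑' k : ℕ, cc k * u ^ (2*k+1) := by
  rw [tsum_mul_tsum_eq_tsum_sum_antidiagonal_of_summable_norm (summable0 u) (summable1 u)]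
  apply tsum_congr
  intro k
  rw [Finset.Nat.sum_antidiagonal_eq_sum_range_succ_mk]
  dsimp only
  rw [cc, Finset.sum_mul]
  apply Finset.sum_congr rfl
  intro m hm
  have hm' : m ≤ k := by have := Finset.mem_range.mp hm; omega
  have hexp : 2*m + (2*(k-m)+1) = 2*k+1 := by omega
  rw [div_mul_div_comm, ← pow_add, hexp]
  ring

open Filter Asymptotics in
private lemma integrable_exp_pow {p : ℝ} (hp : 0 < p) (n : ℕ) :
    IntegrableOn (fun x : ℝ => Real.exp (-p*x) * x ^ n) (Ioi 0) := by
  apply integrable_of_isBigO_exp_neg (half_pos hp)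
  · fun_prop
  · have h1 : Tendsto (fun x : ℝ => x ^ (n:ℝ) * Real.exp (-(p/2)*x)) atTop (nhds 0) :=
      tendsto_rpow_mul_exp_neg_mul_atTop_nhds_zero n (p/2) (half_pos hp)
    have h2 : (fun x : ℝ => (x ^ (n:ℝ) * Real.exp (-(p/2)*x)) * Real.exp (-(p/2)*x))
        =O[atTop] (fun x : ℝ => Real.exp (-(p/2)*x)) := by
      simpa using (h1.isBigO_one ℝ).mul (isBigO_refl (fun x : ℝ => Real.exp (-(p/2)*x)) atTop)
    apply EventuallyEq.trans_isBigO ?_ h2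
    filter_upwards [eventually_gt_atTop (0:ℝ)] with x hx
    rw [Real.rpow_natCast, mul_assoc, ← Real.exp_add,
      show -(p/2)*x + -(p/2)*x = -p*x by ring]
    ring

private lemma integral_exp_pow {p : ℝ} (hp : 0 < p) (n : ℕ) :
    ∫ x in Ioi (0:ℝ), Real.exp (-p*x) * x ^ n = (n.factorial : ℝ) / p^(n+1) := by
  have h := Real.integral_rpow_mul_exp_neg_mul_Ioi (a := (n:ℝ)+1) (r := p) (by positivity) hp
  rw [show ((n:ℝ)+1) - 1 = (n:ℝ) by ring] at h
  have heq : ∫ x in Ioi (0:ℝ), Real.exp (-p*x) * x ^ n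
      = ∫ t in Ioi (0:ℝ), t ^ (n:ℝ) * Real.exp (-(p*t)) := by
    apply setIntegral_congr_fun measurableSet_Ioi
    intro x _
    show Real.exp (-p*x) * x ^ n = x ^ (n:ℝ) * Real.exp (-(p*x))
    rw [Real.rpow_natCast, neg_mul]
    ring
  rw [heq, h, Real.Gamma_nat_eq_factorial,
    show ((n:ℝ)+1) = ((n+1 : ℕ) : ℝ) by push_cast; ring, Real.rpow_natCast]
  rw [one_div, inv_pow]
  ring

/-- The Laplace transform of `(πa/2)·I₀(ax/2)·I₁(ax/2)` is `K(a/p) − π/2`. -/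
theorem laplace_besselI0_besselI1 (a p : ℝ) (ha : 0 < a) (hap : a < p) :
    (Real.pi * a / 2) *
        ∫ x : ℝ in Ioi 0, Real.exp (-p * x) * (besselI0 (a * x / 2) * besselI1 (a * x / 2))
      = (Real.pi / 2) *
        ∑' n : ℕ, ((Nat.choose (2 * (n + 1)) (n + 1) : ℝ)) ^ 2 *
          (a / (4 * p)) ^ (2 * (n + 1)) := by
  have hp : 0 < p := ha.trans hap
  set F : ℕ → ℝ → ℝ := fun k x => Real.exp (-p*x) * (cc k * (a*x/4)^(2*k+1)) with hF
  have hFeq : ∀ k, F k = fun x => (cc k * (a/4)^(2*k+1)) * (Real.exp (-p*x) * x^(2*k+1)) := by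
    intro k
    funext x
    simp only [hF]
    rw [show a*x/4 = (a/4)*x by ring, mul_pow]
    ring
  have hInt : ∀ k, IntegrableOn (F k) (Ioi 0) := by
    intro k
    rw [hFeq k]
    exact (integrable_exp_pow hp (2*k+1)).const_mul _
  have hval : ∀ k, (∫ x in Ioi (0:ℝ), F k x)
      = cc k * (a/4)^(2*k+1) * (((2*k+1).factorial : ℝ) / p^(2*k+2)) := by
    intro k
    rw [hFeq k, MeasureTheory.integral_const_mul _, integral_exp_pow hp (2*k+1),
      show 2*k+1+1 = 2*k+2 by omega]
  have hnorm : ∀ k, (∫ x in Ioi (0:ℝ), ‖F k x‖) = ∫ x in Ioi (0:ℝ), F k x := by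
    intro k
    apply setIntegral_congr_fun measurableSet_Ioi
    intro x hx
    have hx' : (0:ℝ) < x := hx
    have hc := cc_nonneg k
    exact Real.norm_of_nonneg (by positivity)
  have hsum : Summable (fun k : ℕ =>
      cc k * (a/4)^(2*k+1) * (((2*k+1).factorial : ℝ) / p^(2*k+2))) := by
    have hgs : Summable (fun k : ℕ => (a/p^2) * ((a/p)^2)^k) := by
      apply Summable.mul_left
      apply summable_geometric_of_lt_one (by positivity)
      have h1 : a/p < 1 := (div_lt_one hp).mpr hap
      have h0 : 0 ≤ a/p := by positivity
      calc (a/p)^2 ≤ (a/p)*1 := by nlinarith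
        _ < 1 := by nlinarith
    apply Summable.of_nonneg_of_le ?_ ?_ hgs
    · intro k
      have hc := cc_nonneg k
      positivity
    · intro k
      have e1 : cc k * (a/4)^(2*k+1) * (((2*k+1).factorial : ℝ) / p^(2*k+2))
          = (cc k * ((2*k+1).factorial : ℝ)) * (a/4)^(2*k+1) / p^(2*k+2) := by ring
      rw [e1, cc_eq]
      have hC : (((2*k+1).choose k : ℕ) : ℝ)^2 ≤ 4^(2*k+1) := by
        have h := choose_le_two_pow' (2*k+1) k
        calc (((2*k+1).choose k : ℕ) : ℝ)^2 ≤ (((2:ℕ)^(2*k+1) : ℕ) : ℝ)^2 := by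
              gcongr
          _ = 4^(2*k+1) := by
              push_cast
              rw [← pow_mul, mul_comm (2*k+1) 2, pow_mul]
              norm_num
      calc (((2*k+1).choose k : ℕ) : ℝ)^2 * (a/4)^(2*k+1) / p^(2*k+2)
          ≤ 4^(2*k+1) * (a/4)^(2*k+1) / p^(2*k+2) := by gcongr
        _ = a^(2*k+1) / p^(2*k+2) := by rw [← mul_pow, show (4:ℝ)*(a/4) = a by ring]
        _ = (a/p^2) * ((a/p)^2)^k := by
            rw [div_pow, div_pow]
            field_simp
            ring
  have hpt : ∀ x : ℝ, Real.exp (-p*x) * (besselI0 (a*x/2) * besselI1 (a*x/2))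
      = ∑' k : ℕ, F k x := by
    intro x
    rw [besselI0, besselI1, besselProd (a*x/2/2), show a*x/2/2 = a*x/4 by ring, ← tsum_mul_left]
  have hlhs : (∫ x : ℝ in Ioi 0,
      Real.exp (-p * x) * (besselI0 (a * x / 2) * besselI1 (a * x / 2)))
      = ∑' k : ℕ, ∫ x in Ioi (0:ℝ), F k x := by
    rw [show (fun x : ℝ => Real.exp (-p * x) * (besselI0 (a * x / 2) * besselI1 (a * x / 2)))
        = fun x : ℝ => ∑' k : ℕ, F k x from funext hpt]
    rw [← MeasureTheory.integral_tsum_of_summable_integral_norm hInt]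
    simp only [hnorm, hval]
    exact hsum
  rw [hlhs]
  simp only [hval]
  rw [← tsum_mul_left, ← tsum_mul_left]
  apply tsum_congr
  intro k
  have hch : (((2*(k+1)).choose (k+1) : ℕ) : ℝ) = 2 * (((2*k+1).choose k : ℕ) : ℝ) := by
    have h1 : (2*(k+1)).choose (k+1) = (2*k+1).choose k + (2*k+1).choose (k+1) := by
      rw [show 2*(k+1) = (2*k+1)+1 by ring]
      exact Nat.choose_succ_succ (2*k+1) k
    have h2 : (2*k+1).choose (k+1) = (2*k+1).choose k := by
      rw [← Nat.choose_symm (by omega : k+1 ≤ 2*k+1), show 2*k+1-(k+1) = k by omega]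
    rw [h1, h2]
    push_cast
    ring
  have hfac : ((2*k+1).factorial : ℝ) ≠ 0 := by positivity
  have hcck : cc k = (((2*k+1).choose k : ℕ) : ℝ)^2 / ((2*k+1).factorial : ℝ) := by
    rw [eq_div_iff hfac]
    exact cc_eq k
  rw [hcck, hch, show 2*(k+1) = 2*k+2 by ring]
  have hdp : (a/(4*p))^(2*k+2) = (a/4)^(2*k+2) / p^(2*k+2) := by
    rw [show a/(4*p) = (a/4)/p by ring, div_pow]
  rw [hdp, pow_succ (a/4) (2*k+1)]
  field_simp
  ring
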